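/- Let P and Q be positive semidefinite matrices on a finite-dimensional space 𝒳, let 𝒵 = ℂ^r with r ≥ max{rank(P), rank(Q)}, and let |p⟩, |q⟩ ∈ 𝒵 ⊗ 𝒳 be purifications of P and Q respectively, i.e., Tr_𝒵[|p⟩⟨p|] = P and Tr_𝒵[|q⟩⟨q|] = Q. Then the squared Bures distance satisfies B(P,Q) = min over unitaries U on 𝒵 of ‖ |p⟩ − (U ⊗ I_𝒳)|q⟩ ‖₂², where ‖·‖₂ is the Euclidean norm. -/

import Mathlib

open Matrix Kronecker
open scoped ComplexOrder

noncomputable section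

open Classical in
/-- The positive semidefinite square root of a PSD matrix (junk value `0` otherwise). -/
noncomputable def msqrt {n : Type*} [Fintype n] [DecidableEq n] (A : Matrix n n ℂ) :
    Matrix n n ℂ :=
  if h : A.PosSemidef then (h.1.eigenvectorUnitary : Matrix n n ℂ) *
    diagonal ((↑) ∘ (√·) ∘ h.1.eigenvalues) * (star (h.1.eigenvectorUnitary : Matrix n n ℂ))
    else 0

/-- The (square-root) fidelity `F(P,Q) = Tr[√(√Q P √Q)]`. -/
noncomputable def fidelity {n : Type*} [Fintype n] [DecidableEq n]
    (P Q : Matrix n n ℂ) : ℝ :=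
  ((msqrt (msqrt Q * P * msqrt Q)).trace).re

/-- The matrix geometric mean `A # B = A^{1/2} √(A^{-1/2} B A^{-1/2}) A^{1/2}`. -/
noncomputable def geomMean {n : Type*} [Fintype n] [DecidableEq n]
    (A B : Matrix n n ℂ) : Matrix n n ℂ :=
  msqrt A * msqrt ((msqrt A)⁻¹ * B * (msqrt A)⁻¹) * msqrt A

/-- Partial trace over the purifying first factor `𝒵`. -/
noncomputable def ptraceZ {Z X : Type*} [Fintype Z]
    (M : Matrix (Z × X) (Z × X) ℂ) : Matrix X X ℂ :=
  Matrix.of fun x x' => ∑ z : Z, M (z, x) (z, x')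

/-- The squared Bures distance `B(P,Q) = Tr P + Tr Q − 2 F(P,Q)`. -/
noncomputable def buresSq {n : Type*} [Fintype n] [DecidableEq n]
    (P Q : Matrix n n ℂ) : ℝ :=
  P.trace.re + Q.trace.re - 2 * fidelity P Q

/-!
Reshape the purifications into operators `A = unvec p`, `B = unvec q : 𝒵 → 𝒳`, so that
`P = A A†`, `Q = B B†` and `(U ⊗ I) q` becomes `B Uᵀ`. Then
`‖p − (U ⊗ I) q‖² = Tr P + Tr Q − 2 Re Tr (A† B Uᵀ)`, and by the singular value decomposition
the maximum of `Re Tr (M W)` over unitaries `W` is `Tr √(M M†)`. For `M = A† B` we have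
`M M† = C† C` with `C = √Q A`, and `Tr √(C† C) = Tr √(C C†) = Tr √(√Q P √Q)`, once more by the
singular value decomposition.
-/

section SingularValueDecomposition

variable {𝕜 : Type*} [RCLike 𝕜] {m n : Type*} [Fintype m] [Fintype n] [DecidableEq n]

-- Where `s j = 0`, `s⁻¹ j = 0` kills column `j`; this is harmless since `hK` forces it to vanish.
lemma mul_diagonal_inv_mul_diagonal {K : Matrix m n 𝕜} {s : n → 𝕜}
    (hK : Kᴴ * K = diagonal (star s * s)) : K * diagonal s⁻¹ * diagonal s = K := by
  have hE : (K * diagonal (1 - s⁻¹ * s))ᴴ * (K * diagonal (1 - s⁻¹ * s)) = 0 := by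
    rw [conjTranspose_mul, Matrix.mul_assoc, ← Matrix.mul_assoc Kᴴ, hK, diagonal_conjTranspose,
      diagonal_mul_diagonal, diagonal_mul_diagonal, ← diagonal_zero]
    congr 1
    funext j
    by_cases hj : s j = 0 <;> simp [hj]
  rw [conjTranspose_mul_self_eq_zero,
    show diagonal (1 - s⁻¹ * s) = 1 - diagonal (s⁻¹ * s) by rw [← diagonal_one, diagonal_sub]; rfl,
    Matrix.mul_sub, Matrix.mul_one, sub_eq_zero] at hE
  rw [Matrix.mul_assoc, diagonal_mul_diagonal]
  exact hE.symm

lemma conjTranspose_mul_self_mul_diagonal_inv {K : Matrix m n 𝕜} {s : n → 𝕜}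
    (hK : Kᴴ * K = diagonal (star s * s)) :
    (K * diagonal s⁻¹)ᴴ * (K * diagonal s⁻¹) * diagonal s = diagonal s := by
  rw [conjTranspose_mul]
  simp only [Matrix.mul_assoc]
  rw [← Matrix.mul_assoc Kᴴ, hK, diagonal_conjTranspose]
  simp only [diagonal_mul_diagonal]
  congr 1
  funext j
  simp only [Pi.mul_apply, Pi.inv_apply, Pi.star_apply]
  by_cases hj : s j = 0
  · simp [hj]
  · rw [star_inv₀, inv_mul_cancel₀ hj, mul_one, ← mul_assoc,
      inv_mul_cancel₀ (star_ne_zero.mpr hj), one_mul]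

lemma exists_unitary_mul_diagonal_eq {L : Matrix n n 𝕜} {s : n → 𝕜}
    (hL : Lᴴ * L * diagonal s = diagonal s) :
    ∃ G ∈ unitaryGroup n 𝕜, G * diagonal s = L * diagonal s := by
  have hcol : ∀ i j, s j ≠ 0 → (Lᴴ * L) i j = if i = j then 1 else 0 := by
    intro i j hj
    have hij := congr_fun (congr_fun hL i) j
    rw [mul_diagonal, diagonal_apply] at hij
    split_ifs at hij ⊢ with h
    · subst h
      exact (mul_eq_right₀ hj).mp hij
    · exact (mul_eq_zero.mp hij).resolve_right hj
  let v : n → EuclideanSpace 𝕜 n := fun j => WithLp.toLp 2 fun i => L i j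
  have hv : Orthonormal 𝕜 ({j | s j ≠ 0}.domRestrict v) := by
    rw [orthonormal_iff_ite]
    rintro ⟨i, -⟩ ⟨j, hj⟩
    simp only [Set.domRestrict_apply, Subtype.mk.injEq]
    rw [← hcol i j hj]
    simp [v, PiLp.inner_apply, mul_apply, mul_comm]
  obtain ⟨b, hb⟩ := hv.exists_orthonormalBasis_extension_of_card_eq (by simp)
  refine ⟨(EuclideanSpace.basisFun n 𝕜).toBasis.toMatrix b.toBasis,
    (EuclideanSpace.basisFun n 𝕜).toMatrix_orthonormalBasis_mem_unitary b, ?_⟩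
  ext i j
  rw [mul_diagonal, mul_diagonal]
  by_cases hj : s j = 0
  · simp [hj]
  · change b j i * s j = L i j * s j
    rw [hb j hj]

lemma exists_svd (C : Matrix m n 𝕜) :
    ∃ L : Matrix m n 𝕜, ∃ s : n → 𝕜, ∃ V ∈ unitaryGroup n 𝕜, (diagonal s).PosSemidef ∧
      Lᴴ * L * diagonal s = diagonal s ∧ C = L * diagonal s * Vᴴ := by
  have hC := (posSemidef_conjTranspose_mul_self C).1
  set V : Matrix n n 𝕜 := (hC.eigenvectorUnitary : Matrix n n 𝕜)
  set s : n → 𝕜 := fun j => (√(hC.eigenvalues j) : 𝕜)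
  have hV : V * Vᴴ = 1 := Unitary.mul_star_self_of_mem hC.eigenvectorUnitary.2
  have hK : (C * V)ᴴ * (C * V) = diagonal (star s * s) := by
    have hdiag := hC.conjStarAlgAut_star_eigenvectorUnitary
    rw [Unitary.conjStarAlgAut_star_apply] at hdiag
    rw [conjTranspose_mul, ← star_eq_conjTranspose, Matrix.mul_assoc, ← Matrix.mul_assoc Cᴴ,
      ← Matrix.mul_assoc, hdiag]
    congr 1
    funext j
    simp [s, ← RCLike.ofReal_mul,
      Real.mul_self_sqrt ((posSemidef_conjTranspose_mul_self C).eigenvalues_nonneg j)]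
  refine ⟨C * V * diagonal s⁻¹, s, V, hC.eigenvectorUnitary.2, ?_,
    conjTranspose_mul_self_mul_diagonal_inv hK, ?_⟩
  · exact posSemidef_diagonal_iff.mpr fun j => by simp [s]
  · rw [mul_diagonal_inv_mul_diagonal hK, Matrix.mul_assoc, hV, Matrix.mul_one]

lemma exists_unitary_svd (M : Matrix n n 𝕜) :
    ∃ U ∈ unitaryGroup n 𝕜, ∃ s : n → 𝕜, ∃ V ∈ unitaryGroup n 𝕜, (diagonal s).PosSemidef ∧
      M = U * diagonal s * Vᴴ := by
  obtain ⟨L, s, V, hV, hs, hL, rfl⟩ := exists_svd M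
  obtain ⟨U, hU, hUL⟩ := exists_unitary_mul_diagonal_eq hL
  exact ⟨U, hU, s, V, hV, hs, by rw [hUL]⟩

lemma re_trace_diagonal_mul_le {s : n → 𝕜} (hs : (diagonal s).PosSemidef) {Z : Matrix n n 𝕜}
    (hZ : Z ∈ unitaryGroup n 𝕜) :
    RCLike.re (diagonal s * Z).trace ≤ RCLike.re (diagonal s).trace := by
  simp only [trace, diag_apply, diagonal_mul, diagonal_apply_eq, map_sum]
  refine Finset.sum_le_sum fun j _ => ?_
  obtain ⟨hre, him⟩ := RCLike.nonneg_iff.mp (posSemidef_diagonal_iff.mp hs j)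
  have hs_real : s j = (RCLike.re (s j) : 𝕜) := RCLike.ext (by simp) (by simp [him])
  rw [hs_real, RCLike.re_ofReal_mul, RCLike.ofReal_re]
  exact mul_le_of_le_one_right hre
    ((RCLike.re_le_norm _).trans (entry_norm_bound_of_unitary hZ j j))

end SingularValueDecomposition

lemma mul_mul_conjTranspose_mul_conjTranspose {R : Type*} [CommSemiring R] [StarRing R]
    {l m n : Type*} [Fintype m] [Fintype n] {S : Matrix n n R} (hS : S.IsHermitian)
    (A : Matrix l n R) {B : Matrix m n R} (hB : Bᴴ * B * S = S) :
    A * S * Bᴴ * (A * S * Bᴴ)ᴴ = A * (S * S) * Aᴴ := by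
  have hB' : S * (Bᴴ * B) = S := by
    simpa only [conjTranspose_mul, conjTranspose_conjTranspose, hS.eq, Matrix.mul_assoc]
      using congr_arg conjTranspose hB
  rw [conjTranspose_mul, conjTranspose_mul, conjTranspose_conjTranspose, hS.eq]
  calc _ = A * (S * (Bᴴ * B)) * S * Aᴴ := by simp only [Matrix.mul_assoc]
    _ = A * (S * S) * Aᴴ := by rw [hB']; simp only [Matrix.mul_assoc]

section MatrixSqrt

variable {n : Type*} [Fintype n] [DecidableEq n]

open scoped MatrixOrder in
lemma msqrt_eq_cfcSqrt {A : Matrix n n ℂ} (hA : A.PosSemidef) : msqrt A = CFC.sqrt A := by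
  rw [CFC.sqrt_eq_real_sqrt A hA.nonneg, cfcₙ_eq_cfc (hf0 := by simp), hA.1.cfc_eq,
    IsHermitian.cfc, Unitary.conjStarAlgAut_apply, msqrt, dif_pos hA]
  rfl

open scoped MatrixOrder in
lemma posSemidef_msqrt {A : Matrix n n ℂ} (hA : A.PosSemidef) : (msqrt A).PosSemidef := by
  rw [msqrt_eq_cfcSqrt hA]
  exact (CFC.sqrt_nonneg A).posSemidef

open scoped MatrixOrder in
lemma msqrt_mul_msqrt {A : Matrix n n ℂ} (hA : A.PosSemidef) : msqrt A * msqrt A = A := by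
  rw [msqrt_eq_cfcSqrt hA]
  exact CFC.sqrt_mul_sqrt_self A hA.nonneg

open scoped MatrixOrder in
lemma msqrt_mul_self {B : Matrix n n ℂ} (hB : B.PosSemidef) : msqrt (B * B) = B := by
  have hBB : (B * B).PosSemidef := by
    simpa only [hB.1.eq] using posSemidef_conjTranspose_mul_self B
  rw [msqrt_eq_cfcSqrt hBB]
  exact CFC.sqrt_unique rfl hB.nonneg

lemma conjTranspose_mul_self_mul_of_mem_unitaryGroup {V : Matrix n n ℂ}
    (hV : V ∈ unitaryGroup n ℂ) (S : Matrix n n ℂ) : Vᴴ * V * S = S := by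
  rw [← star_eq_conjTranspose, Unitary.star_mul_self_of_mem hV, Matrix.one_mul]

lemma trace_msqrt_svd_mul_conjTranspose {k l : Type*} [Fintype k] [Fintype l]
    {S : Matrix k k ℂ} (hS : S.PosSemidef) {A : Matrix n k ℂ} {B : Matrix l k ℂ}
    (hA : Aᴴ * A * S = S) (hB : Bᴴ * B * S = S) :
    (msqrt (A * S * Bᴴ * (A * S * Bᴴ)ᴴ)).trace = S.trace := by
  rw [mul_mul_conjTranspose_mul_conjTranspose hS.1 A hB,
    ← mul_mul_conjTranspose_mul_conjTranspose hS.1 A hA, (hS.mul_mul_conjTranspose_same A).1.eq,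
    msqrt_mul_self (hS.mul_mul_conjTranspose_same A), trace_mul_cycle, hA]

lemma trace_msqrt_mul_conjTranspose_comm {m : Type*} [Fintype m] [DecidableEq m]
    (C : Matrix m n ℂ) :
    (msqrt (C * Cᴴ)).trace = (msqrt (Cᴴ * C)).trace := by
  obtain ⟨L, s, V, hV, hs, hL, rfl⟩ := exists_svd C
  have hV' := conjTranspose_mul_self_mul_of_mem_unitaryGroup hV (diagonal s)
  rw [trace_msqrt_svd_mul_conjTranspose hs hL hV', ← trace_msqrt_svd_mul_conjTranspose hs hV' hL]
  simp only [conjTranspose_mul, conjTranspose_conjTranspose, hs.1.eq, Matrix.mul_assoc]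

lemma isGreatest_re_trace_mul_unitary (M : Matrix n n ℂ) :
    IsGreatest {t | ∃ W ∈ unitaryGroup n ℂ, t = (M * W).trace.re} (msqrt (M * Mᴴ)).trace.re := by
  obtain ⟨U, hU, s, V, hV, hs, rfl⟩ := exists_unitary_svd M
  set S := diagonal s
  have hU' := conjTranspose_mul_self_mul_of_mem_unitaryGroup hU S
  rw [trace_msqrt_svd_mul_conjTranspose hs hU'
    (conjTranspose_mul_self_mul_of_mem_unitaryGroup hV S)]
  refine ⟨⟨V * Uᴴ, mul_mem hV (Unitary.star_mem hU), ?_⟩, ?_⟩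
  · rw [show U * S * Vᴴ * (V * Uᴴ) = U * (S * (Vᴴ * V)) * Uᴴ by simp only [Matrix.mul_assoc],
      ← star_eq_conjTranspose V, Unitary.star_mul_self_of_mem hV, Matrix.mul_one, trace_mul_cycle,
      hU']
  · rintro t ⟨W, hW, rfl⟩
    have hZ : Vᴴ * W * U ∈ unitaryGroup n ℂ := mul_mem (mul_mem (Unitary.star_mem hV) hW) hU
    calc (U * S * Vᴴ * W).trace.re = (S * (Vᴴ * W * U)).trace.re := by
          rw [show U * S * Vᴴ * W = U * (S * (Vᴴ * W)) by simp only [Matrix.mul_assoc],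
            trace_mul_comm]
          simp only [Matrix.mul_assoc]
      _ ≤ S.trace.re := re_trace_diagonal_mul_le hs hZ

end MatrixSqrt

lemma fidelity_mul_conjTranspose {X Z : Type*} [Fintype X] [DecidableEq X] [Fintype Z]
    [DecidableEq Z] (A B : Matrix X Z ℂ) :
    fidelity (A * Aᴴ) (B * Bᴴ) = (msqrt (Aᴴ * B * (Aᴴ * B)ᴴ)).trace.re := by
  have hQ := posSemidef_self_mul_conjTranspose B
  have hR := (posSemidef_msqrt hQ).1.eq
  have hRR := msqrt_mul_msqrt hQ
  rw [fidelity]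
  generalize msqrt (B * Bᴴ) = R at hR hRR ⊢
  calc (msqrt (R * (A * Aᴴ) * R)).trace.re = (msqrt (R * A * (R * A)ᴴ)).trace.re := by
        rw [conjTranspose_mul, hR]
        simp only [Matrix.mul_assoc]
    _ = (msqrt ((R * A)ᴴ * (R * A))).trace.re := by rw [trace_msqrt_mul_conjTranspose_comm]
    _ = _ := by
        rw [conjTranspose_mul, hR, conjTranspose_mul, conjTranspose_conjTranspose,
          show Aᴴ * R * (R * A) = Aᴴ * (R * R) * A by simp only [Matrix.mul_assoc], hRR]
        simp only [Matrix.mul_assoc]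

section Purification

variable {Z X : Type*}

def unvec (v : Z × X → ℂ) : Matrix X Z ℂ :=
  of fun x z => v (z, x)

lemma ptraceZ_vecMulVec [Fintype Z] (v : Z × X → ℂ) :
    ptraceZ (vecMulVec v (star v)) = unvec v * (unvec v)ᴴ := by
  ext x x'
  simp [ptraceZ, vecMulVec_apply, mul_apply, unvec]

lemma unvec_sub (v w : Z × X → ℂ) : unvec (v - w) = unvec v - unvec w :=
  rfl

lemma unvec_kronecker_one_mulVec [Fintype Z] [Fintype X] [DecidableEq X] (U : Matrix Z Z ℂ)
    (v : Z × X → ℂ) :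
    unvec ((U ⊗ₖ (1 : Matrix X X ℂ)) *ᵥ v) = unvec v * Uᵀ := by
  ext x z
  simp [unvec, mulVec, dotProduct, mul_apply, Fintype.sum_prod_type, one_apply, mul_comm]

lemma sum_normSq_eq_re_trace [Fintype Z] [Fintype X] (v : Z × X → ℂ) :
    ∑ a, Complex.normSq (v a) = (unvec v * (unvec v)ᴴ).trace.re := by
  simp [trace, mul_apply, unvec, Complex.mul_conj, Fintype.sum_prod_type_right]

lemma re_trace_sub_mul_conjTranspose_sub {m n : Type*} [Fintype m] [Fintype n]
    (A B : Matrix m n ℂ) :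
    ((A - B) * (A - B)ᴴ).trace.re =
      (A * Aᴴ).trace.re + (B * Bᴴ).trace.re - 2 * (Aᴴ * B).trace.re := by
  have hcross : (A * Bᴴ).trace.re = (Aᴴ * B).trace.re := by
    rw [← conjTranspose_conjTranspose A, ← conjTranspose_mul, trace_conjTranspose,
      conjTranspose_conjTranspose, trace_mul_comm]
    simp
  rw [conjTranspose_sub, Matrix.sub_mul, Matrix.mul_sub, Matrix.mul_sub, trace_sub, trace_sub,
    trace_sub, Complex.sub_re, Complex.sub_re, Complex.sub_re, hcross, trace_mul_comm B Aᴴ]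
  ring

lemma sum_normSq_sub_kronecker_one_mulVec [Fintype Z] [DecidableEq Z] [Fintype X]
    [DecidableEq X] (p q : Z × X → ℂ) {U : Matrix Z Z ℂ} (hU : Uᴴ * U = 1) :
    ∑ a, Complex.normSq ((p - (U ⊗ₖ (1 : Matrix X X ℂ)) *ᵥ q) a) =
      (unvec p * (unvec p)ᴴ).trace.re + (unvec q * (unvec q)ᴴ).trace.re -
        2 * ((unvec p)ᴴ * unvec q * Uᵀ).trace.re := by
  have hUt : Uᵀ * (Uᵀ)ᴴ = 1 := by
    rw [conjTranspose_transpose_eq_transpose_conjTranspose, ← transpose_mul, hU, transpose_one]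
  rw [sum_normSq_eq_re_trace, unvec_sub, unvec_kronecker_one_mulVec,
    re_trace_sub_mul_conjTranspose_sub, conjTranspose_mul, ← Matrix.mul_assoc,
    Matrix.mul_assoc (unvec q), hUt, Matrix.mul_one, Matrix.mul_assoc]

end Purification

theorem bures_uhlmann_purification_general
    {X : Type*} [Fintype X] [DecidableEq X] {r : ℕ}
    (P Q : Matrix X X ℂ)
    (p q : Fin r × X → ℂ)
    (hp : ptraceZ (Matrix.vecMulVec p (star p)) = P)
    (hq : ptraceZ (Matrix.vecMulVec q (star q)) = Q) :
    IsLeast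
      {t : ℝ | ∃ U : Matrix (Fin r) (Fin r) ℂ, Uᴴ * U = 1 ∧
        t = ∑ a : Fin r × X,
          Complex.normSq ((p - (U ⊗ₖ (1 : Matrix X X ℂ)) *ᵥ q) a)}
      (buresSq P Q) := by
  rw [ptraceZ_vecMulVec] at hp hq
  subst hp hq
  obtain ⟨⟨W, hW, hWmax⟩, hWle⟩ := isGreatest_re_trace_mul_unitary ((unvec p)ᴴ * unvec q)
  have hWt : Wᵀᴴ * Wᵀ = 1 := mem_unitaryGroup_iff'.mp (transpose_mem_unitaryGroup_iff.mpr hW)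
  rw [buresSq, fidelity_mul_conjTranspose]
  refine ⟨⟨Wᵀ, hWt, ?_⟩, ?_⟩
  · rw [sum_normSq_sub_kronecker_one_mulVec p q hWt, transpose_transpose, ← hWmax]
  · rintro t ⟨U, hU, rfl⟩
    rw [sum_normSq_sub_kronecker_one_mulVec p q hU]
    have := hWle ⟨Uᵀ, transpose_mem_unitaryGroup_iff.mpr (mem_unitaryGroup_iff'.mpr hU), rfl⟩
    linarith

/-- For PSD matrices `P, Q` on `𝒳`, `𝒵 = ℂ^r` with
`r ≥ max{rank P, rank Q}`, and purifications `p, q ∈ 𝒵 ⊗ 𝒳` of `P` and `Q`, the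
squared Bures distance `B(P,Q)` equals the minimum of `‖p − (U ⊗ I) q‖₂²` over all
unitaries `U` on `𝒵`. -/
theorem bures_uhlmann_purification
    {X : Type*} [Fintype X] [DecidableEq X] {r : ℕ}
    (P Q : Matrix X X ℂ) (hP : P.PosSemidef) (hQ : Q.PosSemidef)
    (hrP : P.rank ≤ r) (hrQ : Q.rank ≤ r)
    (p q : Fin r × X → ℂ)
    (hp : ptraceZ (Matrix.vecMulVec p (star p)) = P)
    (hq : ptraceZ (Matrix.vecMulVec q (star q)) = Q) :
    IsLeast
      {t : ℝ | ∃ U : Matrix (Fin r) (Fin r) ℂ, Uᴴ * U = 1 ∧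
        t = ∑ a : Fin r × X,
          Complex.normSq ((p - (U ⊗ₖ (1 : Matrix X X ℂ)) *ᵥ q) a)}
      (buresSq P Q) :=
  bures_uhlmann_purification_general P Q p q hp hq
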